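/- arXiv:2201.10049 — 2 statements merged into one kernel-verified Lean document; each statement's English description precedes it below -/
import Mathlib

section
/- Let G = (U, V, E) be an edge-weighted bipartite graph, ex a feasible label, and M a matching contained in the equivalence subgraph of ex. Let S ⊆ U and T ⊆ V be sets of vertices reachable by alternating paths from a fixed unmatched vertex u ∈ U within the equivalence subgraph, and suppose Δ = min { ex_u + ex_v − c(u,v) : u ∈ S, v ∈ V \ T, (u,v) ∈ E } > 0. Define ex'_u = ex_u − Δ for u ∈ S, ex'_v = ex_v + Δ for v ∈ T, and ex' = ex otherwise. Then ex' is a feasible label and every edge of M still lies in the equivalence subgraph of ex'. -/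
/-!
Along an edge `(u, v)` the label sum changes by `-Δ` if only `u ∈ S`, by `+Δ` if only `v ∈ T`,
and not at all otherwise. Matched edges are of the last kind, so they stay tight; `Δ` is at most
the slack of every edge of the first kind, so those stay feasible; edges of the second kind only gain.
-/

/-- A matching in a bipartite graph: a set of edges (pairs) that are pairwise
nonadjacent, i.e. two edges of the matching sharing an endpoint are equal. -/
def IsMatching {U V : Type} (M : Finset (U × V)) : Prop :=
  ∀ e ∈ M, ∀ e' ∈ M, (e.1 = e'.1 ∨ e.2 = e'.2) → e = e'

section LabelShift

variable {U V α : Type*} [DecidableEq U] [DecidableEq V] [AddCommGroup α]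
  (S : Finset U) (T : Finset V) (Δ : α) (f : U → α) (g : V → α) {u : U} {v : V}

def lowerOn : U → α := fun u => if u ∈ S then f u - Δ else f u

def raiseOn : V → α := fun v => if v ∈ T then g v + Δ else g v

variable {S T Δ f g}

theorem lowerOn_add_raiseOn_of_mem_iff (h : u ∈ S ↔ v ∈ T) :
    lowerOn S Δ f u + raiseOn T Δ g v = f u + g v := by
  by_cases hu : u ∈ S
  · simp only [lowerOn, raiseOn, hu, h.mp hu, if_true]
    abel
  · simp only [lowerOn, raiseOn, hu, mt h.mpr hu, if_false]

theorem lowerOn_add_raiseOn_of_mem_of_notMem (hu : u ∈ S) (hv : v ∉ T) :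
    lowerOn S Δ f u + raiseOn T Δ g v = f u + g v - Δ := by
  simp only [lowerOn, raiseOn, hu, hv, if_true, if_false]
  abel

theorem lowerOn_add_raiseOn_of_notMem_of_mem (hu : u ∉ S) (hv : v ∈ T) :
    lowerOn S Δ f u + raiseOn T Δ g v = f u + g v + Δ := by
  simp only [lowerOn, raiseOn, hu, hv, if_true, if_false]
  abel

theorem le_lowerOn_add_raiseOn [PartialOrder α] [IsOrderedAddMonoid α] {c : α} (hΔ : 0 ≤ Δ) (hc : c ≤ f u + g v)
    (hslack : u ∈ S → v ∉ T → Δ ≤ f u + g v - c) :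
    c ≤ lowerOn S Δ f u + raiseOn T Δ g v := by
  by_cases h : u ∈ S ↔ v ∈ T
  · rwa [lowerOn_add_raiseOn_of_mem_iff h]
  by_cases hu : u ∈ S
  · have hv : v ∉ T := fun hv => h (iff_of_true hu hv)
    rw [lowerOn_add_raiseOn_of_mem_of_notMem hu hv]
    exact le_sub_comm.mp (hslack hu hv)
  · have hv : v ∈ T := not_not.mp fun hv => h (iff_of_false hu hv)
    rw [lowerOn_add_raiseOn_of_notMem_of_mem hu hv]
    exact le_add_of_le_of_nonneg hc hΔ

end LabelShift

theorem dual_adjustment_feasible_and_tight_general {U V : Type}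
    [DecidableEq U] [DecidableEq V]
    (E : Finset (U × V)) (c : U × V → ℚ) (exU : U → ℚ) (exV : V → ℚ)
    (hfeas : ∀ e ∈ E, c e ≤ exU e.1 + exV e.2)
    (M : Finset (U × V))
    (htight : ∀ e ∈ M, exU e.1 + exV e.2 = c e)
    (S : Finset U) (T : Finset V)
    (hST : ∀ e ∈ M, (e.1 ∈ S ↔ e.2 ∈ T))
    (Δ : ℚ) (hΔpos : 0 < Δ)
    (hΔle : ∀ e ∈ E, e.1 ∈ S → e.2 ∉ T → Δ ≤ exU e.1 + exV e.2 - c e) :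
    (∀ e ∈ E, c e ≤ (if e.1 ∈ S then exU e.1 - Δ else exU e.1) +
        (if e.2 ∈ T then exV e.2 + Δ else exV e.2)) ∧
      (∀ e ∈ M, (if e.1 ∈ S then exU e.1 - Δ else exU e.1) +
        (if e.2 ∈ T then exV e.2 + Δ else exV e.2) = c e) :=
  ⟨fun e he => le_lowerOn_add_raiseOn hΔpos.le (hfeas e he) (hΔle e he),
    fun e he => (lowerOn_add_raiseOn_of_mem_iff (hST e he)).trans (htight e he)⟩

/-- The dual-adjustment step of the Hungarian (KM) algorithm: `ex` is a feasible
label, `M` a matching lying in the equivalence subgraph, `S ⊆ U`, `T ⊆ V` the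
vertex sets reached by alternating paths from an unmatched root (so each matched
edge has its `U`-endpoint in `S` iff its `V`-endpoint is in `T`), and
`Δ = min { exU u + exV v − c (u,v) : u ∈ S, v ∉ T, (u,v) ∈ E } > 0`.
Updating `ex'_u = ex_u − Δ` on `S` and `ex'_v = ex_v + Δ` on `T` (unchanged
elsewhere) yields a feasible label, and every edge of `M` remains in the
equivalence subgraph of the updated label. -/
theorem dual_adjustment_feasible_and_tight {U V : Type}
    [Fintype U] [Fintype V] [DecidableEq U] [DecidableEq V]
    (E : Finset (U × V)) (c : U × V → ℚ) (exU : U → ℚ) (exV : V → ℚ)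
    (hfeas : ∀ e ∈ E, c e ≤ exU e.1 + exV e.2)
    (M : Finset (U × V)) (hME : M ⊆ E) (hM : IsMatching M)
    (htight : ∀ e ∈ M, exU e.1 + exV e.2 = c e)
    (S : Finset U) (T : Finset V)
    (hST : ∀ e ∈ M, (e.1 ∈ S ↔ e.2 ∈ T))
    (Δ : ℚ) (hΔpos : 0 < Δ)
    (hΔle : ∀ e ∈ E, e.1 ∈ S → e.2 ∉ T → Δ ≤ exU e.1 + exV e.2 - c e)
    (hΔmem : ∃ e ∈ E, e.1 ∈ S ∧ e.2 ∉ T ∧ Δ = exU e.1 + exV e.2 - c e) :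
    (∀ e ∈ E, c e ≤ (if e.1 ∈ S then exU e.1 - Δ else exU e.1) +
        (if e.2 ∈ T then exV e.2 + Δ else exV e.2)) ∧
      (∀ e ∈ M, (if e.1 ∈ S then exU e.1 - Δ else exU e.1) +
        (if e.2 ∈ T then exV e.2 + Δ else exV e.2) = c e) :=
  dual_adjustment_feasible_and_tight_general E c exU exV hfeas M htight S T hST Δ hΔpos hΔle
end

section
/- Let G = (U, V, E) be bipartite with feasible label ex and matching M contained in the equivalence subgraph, saturating all of U except one vertex u₀. If the equivalence subgraph contains an augmenting path from u₀ with respect to M, then augmenting M along this path yields a matching M' saturating U that is contained in the equivalence subgraph, and hence (when |M'| = |U| = |V|) M' is a maximum-weight perfect matching of G. -/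
/-- An augmenting path `u₀, v₀, u₁, v₁, …, u_k, v_k` with respect to a matching `M`
in the bipartite graph with edge set `E`: it starts at the unmatched vertex `u₀`,
alternates between non-matching edges `(uᵢ, vᵢ)` and matching edges `(uᵢ₊₁, vᵢ)`,
and ends at the unmatched vertex `v_k`. -/
structure AugPath {U V : Type} [DecidableEq U] [DecidableEq V]
    (E M : Finset (U × V)) where
  k : ℕ
  us : Fin (k + 1) → U
  vs : Fin (k + 1) → V
  us_inj : Function.Injective us
  vs_inj : Function.Injective vs
  edge_mem : ∀ i, (us i, vs i) ∈ E
  edge_notMem : ∀ i, (us i, vs i) ∉ M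
  match_mem : ∀ i : Fin k, (us i.succ, vs i.castSucc) ∈ M
  start_unmatched : ∀ v, (us 0, v) ∉ M
  end_unmatched : ∀ u, (u, vs (Fin.last k)) ∉ M


/-- The set of edges of an augmenting path. -/
def AugPath.edges {U V : Type} [DecidableEq U] [DecidableEq V]
    {E M : Finset (U × V)} (p : AugPath E M) : Finset (U × V) :=
  (Finset.univ.image fun i : Fin (p.k + 1) => (p.us i, p.vs i)) ∪
    (Finset.univ.image fun i : Fin p.k => (p.us i.succ, p.vs i.castSucc))

/-!
Off the path nothing changes; on the path `u₀ v₀ u₁ … v_k` the matching edges `(uᵢ₊₁, vᵢ)` are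
traded for the non-matching edges `(uᵢ, vᵢ)`, so every `uᵢ` (in particular `u₀`) ends up matched
exactly once and no vertex is hit twice. All edges involved are tight, so the new perfect matching
`M'` attains the dual bound: for every perfect matching `N ⊆ E`,
`∑_N c ≤ ∑_N (exU e.1 + exV e.2) = ∑ exU + ∑ exV = ∑_{M'} (exU e.1 + exV e.2) = ∑_{M'} c`.
-/

open Finset

namespace IsMatching

variable {U V : Type} {M N : Finset (U × V)}

theorem anti (hM : IsMatching M) (hNM : N ⊆ M) : IsMatching N :=
  fun e he e' he' h => hM e (hNM he) e' (hNM he') h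

theorem union [DecidableEq U] [DecidableEq V] (hM : IsMatching M) (hN : IsMatching N)
    (hdisj : ∀ e ∈ M, ∀ e' ∈ N, e.1 ≠ e'.1 ∧ e.2 ≠ e'.2) : IsMatching (M ∪ N) := by
  intro e he e' he' h
  rcases mem_union.1 he with he | he <;> rcases mem_union.1 he' with he' | he'
  · exact hM e he e' he' h
  · have := hdisj e he e' he'
    tauto
  · have := hdisj e' he' e he
    rcases h with h | h
    · exact absurd h.symm this.1
    · exact absurd h.symm this.2
  · exact hN e he e' he' h

theorem injOn_fst (hM : IsMatching M) : Set.InjOn Prod.fst (M : Set (U × V)) :=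
  fun e he e' he' h => hM e he e' he' (Or.inl h)

theorem injOn_snd (hM : IsMatching M) : Set.InjOn Prod.snd (M : Set (U × V)) :=
  fun e he e' he' h => hM e he e' he' (Or.inr h)

variable [Fintype U] [Fintype V] [DecidableEq U] [DecidableEq V]

theorem image_snd_eq_univ_of_card_eq (hM : IsMatching M) (hU : M.image Prod.fst = univ)
    (hUV : Fintype.card U = Fintype.card V) : M.image Prod.snd = univ := by
  apply eq_univ_of_card
  rw [card_image_of_injOn hM.injOn_snd, ← card_image_of_injOn hM.injOn_fst, hU, card_univ, hUV]

theorem sum_add_eq_of_image_eq_univ {β : Type*} [AddCommMonoid β] (hM : IsMatching M)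
    (hU : M.image Prod.fst = univ) (hV : M.image Prod.snd = univ) (f : U → β) (g : V → β) :
    ∑ e ∈ M, (f e.1 + g e.2) = ∑ u, f u + ∑ v, g v := by
  rw [sum_add_distrib, ← hU, ← hV, sum_image hM.injOn_fst, sum_image hM.injOn_snd]

theorem sum_le_sum_of_tight {β : Type*} [AddCommMonoid β] [PartialOrder β]
    [IsOrderedAddMonoid β] {E : Finset (U × V)} {c : U × V → β} {a : U → β} {b : V → β}
    (hfeas : ∀ e ∈ E, c e ≤ a e.1 + b e.2) (hM : IsMatching M) (hMU : M.image Prod.fst = univ)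
    (hMV : M.image Prod.snd = univ) (htight : ∀ e ∈ M, a e.1 + b e.2 = c e) (hNE : N ⊆ E)
    (hN : IsMatching N) (hNU : N.image Prod.fst = univ) (hNV : N.image Prod.snd = univ) :
    ∑ e ∈ N, c e ≤ ∑ e ∈ M, c e :=
  calc ∑ e ∈ N, c e ≤ ∑ e ∈ N, (a e.1 + b e.2) := sum_le_sum fun e he => hfeas e (hNE he)
    _ = ∑ u, a u + ∑ v, b v := hN.sum_add_eq_of_image_eq_univ hNU hNV a b
    _ = ∑ e ∈ M, (a e.1 + b e.2) := (hM.sum_add_eq_of_image_eq_univ hMU hMV a b).symm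
    _ = ∑ e ∈ M, c e := sum_congr rfl htight

end IsMatching

namespace AugPath

variable {U V : Type} [DecidableEq U] [DecidableEq V] {E M : Finset (U × V)} (p : AugPath E M)

def forwardEdges : Finset (U × V) :=
  univ.image fun i : Fin (p.k + 1) => (p.us i, p.vs i)

theorem mem_edges {e : U × V} :
    e ∈ p.edges ↔ (∃ i, (p.us i, p.vs i) = e) ∨ ∃ i : Fin p.k, (p.us i.succ, p.vs i.castSucc) = e := by
  simp [edges]

theorem forwardEdges_subset : p.forwardEdges ⊆ E := by
  simp only [forwardEdges, image_subset_iff, mem_univ, forall_const]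
  exact p.edge_mem

theorem isMatching_forwardEdges : IsMatching p.forwardEdges := by
  simp only [IsMatching, forwardEdges, mem_image, mem_univ, true_and]
  rintro _ ⟨i, rfl⟩ _ ⟨j, rfl⟩ (h | h)
  · rw [p.us_inj h]
  · rw [p.vs_inj h]

theorem edges_sdiff : p.edges \ M = p.forwardEdges := by
  ext e
  simp only [mem_sdiff, p.mem_edges, forwardEdges, mem_image, mem_univ, true_and]
  constructor
  · rintro ⟨h | ⟨i, rfl⟩, heM⟩
    · exact h
    · exact absurd (p.match_mem i) heM
  · rintro ⟨i, rfl⟩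
    exact ⟨Or.inl ⟨i, rfl⟩, p.edge_notMem i⟩

theorem symmDiff_eq : symmDiff M p.edges = M \ p.edges ∪ p.forwardEdges := by
  rw [Finset.symmDiff_def, edges_sdiff]

variable {p}

/-- An edge of `M` leaving the path would be a second matching edge at the vertex it shares with
the path: at `u₀` and `v_k` there is none, elsewhere there is a backward edge `(uᵢ₊₁, vᵢ)`. -/
theorem fst_ne_us_of_mem_sdiff (hM : IsMatching M) {e : U × V} (he : e ∈ M \ p.edges) (i) :
    e.1 ≠ p.us i := by
  obtain ⟨heM, heP⟩ := mem_sdiff.1 he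
  intro h
  rcases Fin.eq_zero_or_eq_succ i with rfl | ⟨j, rfl⟩
  · exact p.start_unmatched e.2 (h ▸ heM)
  · exact heP (p.mem_edges.2 (Or.inr ⟨j, (hM e heM _ (p.match_mem j) (Or.inl h)).symm⟩))

theorem snd_ne_vs_of_mem_sdiff (hM : IsMatching M) {e : U × V} (he : e ∈ M \ p.edges) (i) :
    e.2 ≠ p.vs i := by
  obtain ⟨heM, heP⟩ := mem_sdiff.1 he
  intro h
  rcases Fin.eq_castSucc_or_eq_last i with ⟨j, rfl⟩ | rfl
  · exact heP (p.mem_edges.2 (Or.inr ⟨j, (hM e heM _ (p.match_mem j) (Or.inr h)).symm⟩))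
  · exact p.end_unmatched e.1 (h ▸ heM)

theorem isMatching_symmDiff (hM : IsMatching M) : IsMatching (symmDiff M p.edges) := by
  rw [p.symmDiff_eq]
  refine (hM.anti sdiff_subset).union p.isMatching_forwardEdges ?_
  simp only [forwardEdges, mem_image, mem_univ, true_and]
  rintro e he _ ⟨i, rfl⟩
  exact ⟨fst_ne_us_of_mem_sdiff hM he i, snd_ne_vs_of_mem_sdiff hM he i⟩

theorem exists_mem_symmDiff (hsat : ∀ u, u ≠ p.us 0 → ∃ v, (u, v) ∈ M) (u : U) :
    ∃ v, (u, v) ∈ symmDiff M p.edges := by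
  simp only [p.symmDiff_eq, mem_union, mem_sdiff, forwardEdges, mem_image, mem_univ, true_and]
  by_cases hu : ∃ i, p.us i = u
  · obtain ⟨i, rfl⟩ := hu
    exact ⟨p.vs i, Or.inr ⟨i, rfl⟩⟩
  · simp only [not_exists] at hu
    obtain ⟨v, hv⟩ := hsat u (Ne.symm (hu 0))
    refine ⟨v, Or.inl ⟨hv, fun hP => ?_⟩⟩
    rcases p.mem_edges.1 hP with ⟨i, hi⟩ | ⟨i, hi⟩
    · exact hu i (congrArg Prod.fst hi)
    · exact hu i.succ (congrArg Prod.fst hi)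

end AugPath

theorem augment_in_equality_subgraph_optimal_general {U V : Type}
    [Fintype U] [Fintype V] [DecidableEq U] [DecidableEq V]
    (E : Finset (U × V)) (c : U × V → ℚ) (exU : U → ℚ) (exV : V → ℚ)
    (hfeas : ∀ e ∈ E, c e ≤ exU e.1 + exV e.2)
    (M : Finset (U × V)) (hME : M ⊆ E) (hM : IsMatching M)
    (htight : ∀ e ∈ M, exU e.1 + exV e.2 = c e)
    (u₀ : U) (hsat : ∀ u, u ≠ u₀ → ∃ v, (u, v) ∈ M)
    (p : AugPath (E.filter fun e => exU e.1 + exV e.2 = c e) M)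
    (hstart : p.us 0 = u₀) :
    IsMatching (symmDiff M p.edges) ∧
      symmDiff M p.edges ⊆ E ∧
      (∀ e ∈ symmDiff M p.edges, exU e.1 + exV e.2 = c e) ∧
      (∀ u, ∃ v, (u, v) ∈ symmDiff M p.edges) ∧
      (Fintype.card U = Fintype.card V →
        ∀ N ⊆ E, IsMatching N → N.image Prod.fst = Finset.univ →
          N.image Prod.snd = Finset.univ →
            ∑ e ∈ N, c e ≤ ∑ e ∈ symmDiff M p.edges, c e) := by
  set M' := symmDiff M p.edges with hM'_def
  have hMT : M ⊆ E.filter fun e => exU e.1 + exV e.2 = c e :=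
    fun e he => mem_filter.2 ⟨hME he, htight e he⟩
  have hM'T : M' ⊆ E.filter fun e => exU e.1 + exV e.2 = c e := by
    rw [hM'_def, p.symmDiff_eq]
    exact union_subset (sdiff_subset.trans hMT) p.forwardEdges_subset
  have hM'tight : ∀ e ∈ M', exU e.1 + exV e.2 = c e := fun e he => (mem_filter.1 (hM'T he)).2
  have hM' : IsMatching M' := p.isMatching_symmDiff hM
  have hsat' : ∀ u, ∃ v, (u, v) ∈ M' := p.exists_mem_symmDiff (hstart ▸ hsat)
  have hM'U : M'.image Prod.fst = univ :=
    eq_univ_of_forall fun u => mem_image.2 <| (hsat' u).elim fun v hv => ⟨(u, v), hv, rfl⟩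
  refine ⟨hM', hM'T.trans (filter_subset _ _), hM'tight, hsat', ?_⟩
  intro hUV N hNE hN hNU hNV
  exact hM'.sum_le_sum_of_tight hfeas hM'U (hM'.image_snd_eq_univ_of_card_eq hM'U hUV) hM'tight
    hNE hN hNU hNV

/-- One augmentation restores optimality: let `ex` be a feasible label and `M` a
matching lying in the equivalence subgraph that saturates all of `U` except the
vertex `u₀`.  If the equivalence subgraph contains an augmenting path from `u₀`
with respect to `M`, then augmenting along it yields a matching `M' = M △ P`
that saturates `U`, lies in the equivalence subgraph, and hence (when
`|U| = |V|`, so that `M'` is perfect) is a maximum-weight perfect matching. -/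
theorem augment_in_equality_subgraph_optimal {U V : Type}
    [Fintype U] [Fintype V] [DecidableEq U] [DecidableEq V]
    (E : Finset (U × V)) (c : U × V → ℚ) (exU : U → ℚ) (exV : V → ℚ)
    (hfeas : ∀ e ∈ E, c e ≤ exU e.1 + exV e.2)
    (M : Finset (U × V)) (hME : M ⊆ E) (hM : IsMatching M)
    (htight : ∀ e ∈ M, exU e.1 + exV e.2 = c e)
    (u₀ : U) (hsat : ∀ u, u ≠ u₀ → ∃ v, (u, v) ∈ M) (hunm : ∀ v, (u₀, v) ∉ M)
    (p : AugPath (E.filter fun e => exU e.1 + exV e.2 = c e) M)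
    (hstart : p.us 0 = u₀) :
    IsMatching (symmDiff M p.edges) ∧
      symmDiff M p.edges ⊆ E ∧
      (∀ e ∈ symmDiff M p.edges, exU e.1 + exV e.2 = c e) ∧
      (∀ u, ∃ v, (u, v) ∈ symmDiff M p.edges) ∧
      (Fintype.card U = Fintype.card V →
        ∀ N ⊆ E, IsMatching N → N.image Prod.fst = Finset.univ →
          N.image Prod.snd = Finset.univ →
            ∑ e ∈ N, c e ≤ ∑ e ∈ symmDiff M p.edges, c e) :=
  augment_in_equality_subgraph_optimal_general E c exU exV hfeas M hME hM htight u₀ hsat p hstart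
end
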